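/- Let I be an ideal of a commutative unital ring R. If I is idempotent, then for every R-module M, Γ_I(M/Γ_I(M)) = 0, where Γ_I denotes the I-torsion functor; i.e., Γ_I is a radical on R-Mod. -/
import Mathlib

lemma pow_eq_self_of_idem {R : Type*} [CommRing R] {I : Ideal R} (hI : I ^ 2 = I)
    {k : ℕ} (hk : 0 < k) : I ^ k = I := by
  induction k with
  | zero => exact absurd hk (lt_irrefl 0)
  | succ n ih =>
    rcases Nat.eq_zero_or_pos n with h0 | hpos
    · simp [h0]
    · rw [pow_succ, ih hpos, ← pow_two, hI]

/-- The `I`-torsion submodule `Γ_I(M) = {m ∈ M : I^k m = 0 for some k ≥ 1}`. -/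
def torsionGamma (R : Type*) [CommRing R] (I : Ideal R) (M : Type*) [AddCommGroup M]
    [Module R M] : Submodule R M where
  carrier := {m | ∃ k : ℕ, 0 < k ∧ ∀ i ∈ I ^ k, i • m = 0}
  zero_mem' := ⟨1, one_pos, fun i _ => smul_zero i⟩
  add_mem' := by
    rintro a b ⟨k, hk, ha⟩ ⟨l, hl, hb⟩
    refine ⟨max k l, lt_of_lt_of_le hk (le_max_left k l), fun i hi => ?_⟩
    rw [smul_add, ha i (Ideal.pow_le_pow_right (le_max_left k l) hi),
      hb i (Ideal.pow_le_pow_right (le_max_right k l) hi), add_zero]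
  smul_mem' := by
    rintro c a ⟨k, hk, ha⟩
    exact ⟨k, hk, fun i hi => by rw [smul_comm, ha i hi, smul_zero]⟩

/-- If `I` is idempotent, then `Γ_I(M / Γ_I(M)) = 0` for every `R`-module `M`;
i.e. `Γ_I` is a radical on `R`-Mod. -/
theorem stmt_9 (R : Type*) [CommRing R] (I : Ideal R) (hI : I ^ 2 = I)
    (M : Type*) [AddCommGroup M] [Module R M] :
    torsionGamma R I (M ⧸ torsionGamma R I M) = ⊥ := by
  rw [eq_bot_iff]
  rintro x ⟨k, hk, hx⟩
  obtain ⟨m, rfl⟩ := Submodule.Quotient.mk_surjective _ x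
  rw [pow_eq_self_of_idem hI hk] at hx
  -- each `i ∈ I` satisfies `i • m ∈ Γ_I(M)`
  have hmem : ∀ i ∈ I, i • m ∈ torsionGamma R I M := by
    intro i hi
    have := hx i hi
    rwa [← Submodule.Quotient.mk_smul, Submodule.Quotient.mk_eq_zero] at this
  -- show `m ∈ Γ_I(M)` with exponent 2
  have : m ∈ torsionGamma R I M := by
    refine ⟨2, two_pos, fun i hi => ?_⟩
    rw [pow_two] at hi
    refine Submodule.mul_induction_on hi (fun a ha b hb => ?_)
      (fun x y hx' hy' => by rw [add_smul, hx', hy', add_zero])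
    obtain ⟨l, hl, hbm⟩ := hmem b hb
    rw [pow_eq_self_of_idem hI hl] at hbm
    rw [mul_smul]
    exact hbm a ha
  simpa [Submodule.Quotient.mk_eq_zero] using this
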